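/- Let G = ℤ_{n₁} × ⋯ × ℤ_{n_d} with all n_i ≥ 2 and n = n₁n₂⋯n_d, and let S be an inverse-closed subset of G∖{(0,…,0)} with ⟨S⟩ = G. Suppose that |S| = p^l is a prime power such that p^l | n but p^{l+1} ∤ n, and suppose further that exactly one of n₁,…,n_d, say n_t, is divisible by p. Then Cay(G, S) admits a total perfect code if and only if s_t ≢ s_t′ (mod p^l) for each pair of distinct elements (s₁,…,s_d), (s₁′,…,s_d′) of S. -/

import Mathlib

/-- The Cayley graph of an additive group `G` with connection set `S`.
(When `S` is inverse-closed and does not contain `0`, `x` and `y` are adjacent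
iff `y - x ∈ S`.) -/
def cayley {G : Type*} [AddGroup G] (S : Set G) : SimpleGraph G :=
  SimpleGraph.fromRel (fun x y => y - x ∈ S)

/-- A perfect code in a graph: an independent set such that every vertex outside it
has exactly one neighbour in it. -/
def IsPerfectCode {V : Type*} (Γ : SimpleGraph V) (C : Set V) : Prop :=
  (∀ x ∈ C, ∀ y ∈ C, ¬ Γ.Adj x y) ∧ ∀ v, v ∉ C → ∃! c, c ∈ C ∧ Γ.Adj v c

/-- A total perfect code in a graph: every vertex has exactly one neighbour in it. -/
def IsTotalPerfectCode {V : Type*} (Γ : SimpleGraph V) (C : Set V) : Prop :=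
  ∀ v, ∃! c, c ∈ C ∧ Γ.Adj v c

/-- The subgroup of periods of a subset `X` of an abelian group:
`{g | X + g = X}`. -/
def periods {G : Type*} [AddCommGroup G] (X : Set G) : AddSubgroup G where
  carrier := {g | ∀ x : G, x + g ∈ X ↔ x ∈ X}
  zero_mem' := by simp
  add_mem' := by
    intro a b ha hb x
    rw [← add_assoc]
    exact (hb _).trans (ha x)
  neg_mem' := by
    intro a ha x
    have := ha (x + -a)
    simpa using this.symm

/-- `(A, B)` is a factorization of the abelian group `G`: every element of `G` can be
uniquely written as `a + b` with `a ∈ A` and `b ∈ B`. -/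
def IsFactorization {G : Type*} [AddCommGroup G] (A B : Set G) : Prop :=
  ∀ g : G, ∃! ab : G × G, ab.1 ∈ A ∧ ab.2 ∈ B ∧ ab.1 + ab.2 = g

/-- An abelian group is good if in every factorization of it into two factors
at least one factor is periodic. -/
def IsGood (G : Type*) [AddCommGroup G] : Prop :=
  ∀ A B : Set G, IsFactorization A B → periods A ≠ ⊥ ∨ periods B ≠ ⊥

/-!
Reducing the `t`-th coordinate modulo `p^l` is a surjective homomorphism `ψ : G → ℤ_{p^l}`
(as `p^l ∣ n_t`), and for a symmetric `S ∌ 0` a total perfect code `C` of `Cay(G, S)` is the same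
as a factorization `G = S ⊕ C`. If `ψ` is injective on `S`, it is a bijection `S → ℤ_{p^l}` and
`ker ψ` is a complementary factor. Conversely, if `G = S ⊕ C` then `p ∤ |C| = |G| / p^l`, and for
every nontrivial character `χ` of `ℤ_{p^l}` we get `(∑_S χψ)(∑_C χψ) = ∑_G χψ = 0`, where
`∑_C χψ ≠ 0` because it is a sum of `|C|` roots of unity of `p`-power order. So all nontrivial
Fourier coefficients of `ψ(S)` vanish: `ψ` takes each value on `S` exactly `|S| / p^l = 1` times.
-/

open Finset Function

theorem cayley_adj_iff {G : Type*} [AddGroup G] {S : Set G} (hS0 : 0 ∉ S)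
    (hSneg : ∀ s ∈ S, -s ∈ S) {x y : G} : (cayley S).Adj x y ↔ y - x ∈ S := by
  rw [cayley, SimpleGraph.fromRel_adj]
  constructor
  · rintro ⟨-, h | h⟩
    · exact h
    · simpa using hSneg _ h
  · intro h
    refine ⟨?_, Or.inl h⟩
    rintro rfl
    exact hS0 (by simpa using h)

theorem isTotalPerfectCode_cayley_iff_isFactorization {G : Type*} [AddCommGroup G]
    {S C : Set G} (hS0 : 0 ∉ S) (hSneg : ∀ s ∈ S, -s ∈ S) :
    IsTotalPerfectCode (cayley S) C ↔ IsFactorization S C := by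
  simp only [IsTotalPerfectCode, IsFactorization, cayley_adj_iff hS0 hSneg]
  refine forall_congr' fun g => ⟨?_, ?_⟩
  · rintro ⟨c, ⟨hc, hcS⟩, huniq⟩
    refine ⟨(g - c, c), ⟨by simpa using hSneg _ hcS, hc, sub_add_cancel g c⟩, ?_⟩
    rintro ⟨a, b⟩ ⟨ha, hb, rfl⟩
    obtain rfl : b = c := huniq b ⟨hb, by simpa using hSneg a ha⟩
    simp
  · rintro ⟨⟨a, c⟩, ⟨ha, hc, rfl⟩, huniq⟩
    refine ⟨c, ⟨hc, by simpa using hSneg a ha⟩, fun c' ⟨hc', hc'S⟩ => ?_⟩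
    have := huniq (a + c - c', c') ⟨by simpa using hSneg _ hc'S, hc', sub_add_cancel _ _⟩
    exact congrArg Prod.snd this

namespace IsFactorization

variable {G : Type*} [AddCommGroup G] [Fintype G] {A B : Finset G}

theorem sum_sum_add {M : Type*} [AddCommMonoid M] (h : IsFactorization (A : Set G) B)
    (f : G → M) : ∑ a ∈ A, ∑ b ∈ B, f (a + b) = ∑ g, f g := by
  rw [← Finset.sum_product']
  refine Finset.sum_bij (fun ab _ => ab.1 + ab.2) (fun _ _ => mem_univ _) ?_ ?_ fun _ _ => rfl
  · intro ab hab ab' hab' heq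
    rw [mem_product] at hab hab'
    exact (h _).unique ⟨hab.1, hab.2, rfl⟩ ⟨hab'.1, hab'.2, heq.symm⟩
  · intro g _
    obtain ⟨ab, ⟨ha, hb, hab⟩, -⟩ := h g
    exact ⟨ab, mem_product.2 ⟨ha, hb⟩, hab⟩

theorem card_mul_card (h : IsFactorization (A : Set G) B) : #A * #B = Fintype.card G := by
  simpa only [sum_const, smul_eq_mul, mul_one, card_univ] using h.sum_sum_add fun _ => (1 : ℕ)

theorem sum_mul_sum_addChar (h : IsFactorization (A : Set G) B) (χ : AddChar G ℂ) :
    (∑ a ∈ A, χ a) * ∑ b ∈ B, χ b = ∑ g, χ g := by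
  simp_rw [Finset.sum_mul_sum, ← AddChar.map_add_eq_mul]
  exact h.sum_sum_add χ

end IsFactorization

theorem isFactorization_ker {G H : Type*} [AddCommGroup G] [AddGroup H] {S : Set G}
    (ψ : G →+ H) (hψ : Set.BijOn ψ S Set.univ) : IsFactorization S (ψ.ker : Set G) := by
  intro g
  obtain ⟨s, hs, hψs⟩ := hψ.surjOn (Set.mem_univ (ψ g))
  refine ⟨(s, g - s), ⟨hs, by simp [hψs], add_sub_cancel s g⟩, ?_⟩
  rintro ⟨a, c⟩ ⟨ha, hc, rfl⟩
  have hc : ψ c = 0 := hc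
  obtain rfl : a = s := hψ.injOn ha hs (by simp [hψs, hc])
  simp

open Polynomial in
theorem prime_dvd_card_of_sum_pow_eq_zero {K ι : Type*} [Field K] [CharZero K] {p l : ℕ}
    (hp : p.Prime) {x : K} (hx : x ^ p ^ l = 1) (hx1 : x ≠ 1) {F : Finset ι} (e : ι → ℕ)
    (hsum : ∑ c ∈ F, x ^ e c = 0) : p ∣ #F := by
  have : Fact p.Prime := ⟨hp⟩
  obtain ⟨j, -, hj⟩ := (Nat.dvd_prime_pow hp).1 (orderOf_dvd_of_pow_eq_one hx)
  obtain ⟨j, rfl⟩ : ∃ j', j = j' + 1 := by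
    refine Nat.exists_eq_succ_of_ne_zero ?_
    rintro rfl
    exact hx1 (orderOf_eq_one_iff.1 (by simpa using hj))
  have hpos : 0 < p ^ (j + 1) := pow_pos hp.pos _
  have hprim : IsPrimitiveRoot x (p ^ (j + 1)) := hj ▸ IsPrimitiveRoot.orderOf x
  -- `x` is a root of `∑ X ^ e c`, so `Φ_{p^(j+1)}` divides it; evaluate at `1`, where `Φ` is `p`.
  obtain ⟨Q, hQ⟩ : cyclotomic (p ^ (j + 1)) ℤ ∣ ∑ c ∈ F, X ^ e c := by
    rw [cyclotomic_eq_minpoly hprim hpos]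
    exact minpoly.isIntegrallyClosed_dvd (hprim.isIntegral hpos) (by simpa using hsum)
  have h1 := congrArg (Polynomial.eval 1) hQ
  rw [eval_mul, eval_one_cyclotomic_prime_pow, eval_finsetSum] at h1
  exact Int.natCast_dvd_natCast.1 ⟨Q.eval 1, by simpa using h1⟩

theorem AddChar.zmod_apply_eq_pow {k : ℕ} [NeZero k] {M : Type*} [CommMonoid M]
    (χ : AddChar (ZMod k) M) (a : ZMod k) : χ a = χ 1 ^ a.val := by
  rw [← AddChar.map_nsmul_eq_pow, nsmul_one, ZMod.natCast_zmod_val]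

theorem AddChar.sum_zmod_prime_pow_ne_zero {p l : ℕ} (hp : p.Prime) {ι : Type*}
    {χ : AddChar (ZMod (p ^ l)) ℂ} (hχ : χ ≠ 0) {F : Finset ι} (f : ι → ZMod (p ^ l))
    (hF : ¬ p ∣ #F) : ∑ c ∈ F, χ (f c) ≠ 0 := by
  have : NeZero (p ^ l) := ⟨pow_ne_zero l hp.ne_zero⟩
  have hχ1 : χ 1 ≠ 1 := fun h => hχ (AddChar.eq_zero_iff.2 fun a => by
    rw [χ.zmod_apply_eq_pow, h, one_pow])
  have hχp : χ 1 ^ p ^ l = 1 := by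
    rw [← AddChar.map_nsmul_eq_pow, nsmul_one, ZMod.natCast_self, AddChar.map_zero_eq_one]
  rw [Finset.sum_congr rfl fun c _ => χ.zmod_apply_eq_pow (f c)]
  exact fun hsum => hF (prime_dvd_card_of_sum_pow_eq_zero hp hχp hχ1 _ hsum)

theorem card_filter_mul_card_eq_of_sum_addChar_eq_zero {H ι : Type*} [AddCommGroup H]
    [Fintype H] [DecidableEq H] {S : Finset ι} (f : ι → H)
    (hS : ∀ χ : AddChar H ℂ, χ ≠ 0 → ∑ s ∈ S, χ (f s) = 0) (r : H) :
    #{s ∈ S | f s = r} * Fintype.card H = #S := by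
  suffices h : ((#{s ∈ S | f s = r} * Fintype.card H : ℕ) : ℂ) = #S by exact_mod_cast h
  calc ((#{s ∈ S | f s = r} * Fintype.card H : ℕ) : ℂ)
      = ∑ s ∈ S, ∑ χ : AddChar H ℂ, χ (f s - r) := by
        simp_rw [AddChar.sum_apply_eq_ite, sub_eq_zero, ← Finset.sum_filter]
        simp
    _ = ∑ χ : AddChar H ℂ, χ (-r) * ∑ s ∈ S, χ (f s) := by
        rw [Finset.sum_comm]
        simp_rw [Finset.mul_sum, sub_eq_add_neg, AddChar.map_add_eq_mul, mul_comm]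
    _ = #S := by
        rw [Finset.sum_eq_single 0 (fun χ _ hχ => by rw [hS χ hχ, mul_zero]) (by simp)]
        simp

theorem injOn_of_isFactorization {G : Type*} [AddCommGroup G] [Fintype G] {p l : ℕ}
    (hp : p.Prime) (ψ : G →+ ZMod (p ^ l)) (hψ : Surjective ψ) {S C : Finset G}
    (hSC : IsFactorization (S : Set G) C) (hS : #S = p ^ l) (hC : ¬ p ∣ #C) : Set.InjOn ψ S := by
  have : NeZero (p ^ l) := ⟨pow_ne_zero l hp.ne_zero⟩
  have hvanish : ∀ χ : AddChar (ZMod (p ^ l)) ℂ, χ ≠ 0 → ∑ s ∈ S, χ (ψ s) = 0 := by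
    intro χ hχ
    have hχψ : χ.compAddMonoidHom ψ ≠ 0 := fun h =>
      hχ (AddChar.compAddMonoidHom_injective_left ψ hψ h)
    have hG := (AddChar.sum_eq_zero_iff_ne_zero).2 hχψ
    rw [← hSC.sum_mul_sum_addChar] at hG
    exact (mul_eq_zero.1 hG).resolve_right (AddChar.sum_zmod_prime_pow_ne_zero hp hχ ψ hC)
  intro s hs s' hs' hss'
  have hfiber := card_filter_mul_card_eq_of_sum_addChar_eq_zero ψ hvanish (ψ s)
  rw [ZMod.card, hS, Nat.mul_eq_right (pow_ne_zero l hp.ne_zero)] at hfiber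
  exact card_le_one.1 hfiber.le s (mem_filter.2 ⟨hs, rfl⟩) s' (mem_filter.2 ⟨hs', hss'.symm⟩)

theorem exists_isTotalPerfectCode_cayley_iff_injOn {G : Type*} [AddCommGroup G] [Fintype G]
    {p l : ℕ} (hp : p.Prime) (ψ : G →+ ZMod (p ^ l)) (hψ : Surjective ψ) {S : Finset G}
    (hS0 : 0 ∉ S) (hSneg : ∀ s ∈ S, -s ∈ S) (hS : #S = p ^ l)
    (hG : ¬ p ^ (l + 1) ∣ Fintype.card G) :
    (∃ C : Set G, IsTotalPerfectCode (cayley (S : Set G)) C) ↔ Set.InjOn ψ S := by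
  have : NeZero (p ^ l) := ⟨pow_ne_zero l hp.ne_zero⟩
  simp_rw [isTotalPerfectCode_cayley_iff_isFactorization (S := (S : Set G)) hS0 hSneg]
  constructor
  · classical
    rintro ⟨C, hC⟩
    rw [← C.coe_toFinset] at hC
    refine injOn_of_isFactorization hp ψ hψ hC hS fun ⟨m, hm⟩ => hG ⟨m, ?_⟩
    rw [← hC.card_mul_card, hS, hm, pow_succ, mul_assoc]
  · intro hinj
    refine ⟨ψ.ker, isFactorization_ker ψ ⟨Set.mapsTo_univ _ _, hinj, ?_⟩⟩
    intro r _
    have himg : S.image ψ = univ :=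
      eq_univ_of_card _ (by rw [card_image_of_injOn hinj, hS, ZMod.card])
    obtain ⟨s, hs, rfl⟩ := mem_image.1 (himg ▸ mem_univ r)
    exact ⟨s, hs, rfl⟩

theorem Nat.prime_pow_dvd_of_dvd_prod {ι : Type*} [Fintype ι] {n : ι → ℕ} {p l : ℕ}
    (hp : p.Prime) {t : ι} (hdvd : p ^ l ∣ ∏ i, n i) (huniq : ∀ i, p ∣ n i → i = t) :
    p ^ l ∣ n t := by
  classical
  rw [← Finset.mul_prod_erase univ n (mem_univ t)] at hdvd
  refine (Nat.Coprime.pow_left l ?_).dvd_of_dvd_mul_right hdvd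
  rw [hp.coprime_iff_not_dvd, hp.prime.dvd_finsetProd_iff]
  rintro ⟨i, hi, hpi⟩
  exact (mem_erase.1 hi).1 (huniq i hpi)

theorem totalPerfectCode_iff_mod_p_pow_general (d : ℕ) (n : Fin d → ℕ)
    [∀ i, NeZero (n i)]
    (S : Finset (∀ i, ZMod (n i))) (h0 : (0 : ∀ i, ZMod (n i)) ∉ S)
    (hinv : ∀ s ∈ S, -s ∈ S)
    (p l : ℕ) (hp : p.Prime)
    (hcard : S.card = p ^ l)
    (hdvd : p ^ l ∣ ∏ i, n i) (hndvd : ¬ p ^ (l + 1) ∣ ∏ i, n i)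
    (t : Fin d) (huniq : ∀ i, p ∣ n i → i = t) :
    (∃ C : Set (∀ i, ZMod (n i)),
        IsTotalPerfectCode (cayley (S : Set (∀ i, ZMod (n i)))) C) ↔
      ∀ s ∈ S, ∀ s' ∈ S, s ≠ s' → ¬ ((s t).val ≡ (s' t).val [MOD p ^ l]) := by
  have hkt : p ^ l ∣ n t := Nat.prime_pow_dvd_of_dvd_prod hp hdvd huniq
  let ψ : (∀ i, ZMod (n i)) →+ ZMod (p ^ l) :=
    (ZMod.castHom hkt (ZMod (p ^ l))).toAddMonoidHom.comp (Pi.evalAddMonoidHom _ t)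
  have hψ : Surjective ψ := (ZMod.castHom_surjective hkt).comp (surjective_eval t)
  have hψeq (s s' : ∀ i, ZMod (n i)) : ψ s = ψ s' ↔ (s t).val ≡ (s' t).val [MOD p ^ l] := by
    change ZMod.cast (s t) = ZMod.cast (s' t) ↔ _
    rw [ZMod.cast_eq_val, ZMod.cast_eq_val, ZMod.natCast_eq_natCast_iff]
  have hG : ¬ p ^ (l + 1) ∣ Fintype.card (∀ i, ZMod (n i)) := by simpa using hndvd
  rw [exists_isTotalPerfectCode_cayley_iff_injOn hp ψ hψ h0 hinv hcard hG]
  simp only [Set.InjOn, mem_coe, hψeq]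
  exact forall₂_congr fun s _ => forall₂_congr fun s' _ => not_imp_not.symm

/-- Theorem 4.11: let `G = ℤ_{n₁} × ⋯ × ℤ_{n_d}` of order `n = n₁⋯n_d` and `S` an
inverse-closed generating subset of `G ∖ {0}` with `|S| = p^l` a prime power such
that `p^l ∣ n` but `p^{l+1} ∤ n`, and suppose exactly one of `n₁, …, n_d`, say
`n_t`, is divisible by `p`. Then `Cay(G, S)` admits a total perfect code iff
`s_t ≢ s'_t (mod p^l)` for all distinct `s, s' ∈ S`. -/
theorem totalPerfectCode_iff_mod_p_pow (d : ℕ) (hd : 1 ≤ d) (n : Fin d → ℕ)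
    (hn : ∀ i, 2 ≤ n i) [∀ i, NeZero (n i)]
    (S : Finset (∀ i, ZMod (n i))) (h0 : (0 : ∀ i, ZMod (n i)) ∉ S)
    (hinv : ∀ s ∈ S, -s ∈ S)
    (hgen : AddSubgroup.closure (S : Set (∀ i, ZMod (n i))) = ⊤)
    (p l : ℕ) (hp : p.Prime) (hl : 1 ≤ l)
    (hcard : S.card = p ^ l)
    (hdvd : p ^ l ∣ ∏ i, n i) (hndvd : ¬ p ^ (l + 1) ∣ ∏ i, n i)
    (t : Fin d) (ht : p ∣ n t) (huniq : ∀ i, p ∣ n i → i = t) :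
    (∃ C : Set (∀ i, ZMod (n i)),
        IsTotalPerfectCode (cayley (S : Set (∀ i, ZMod (n i)))) C) ↔
      ∀ s ∈ S, ∀ s' ∈ S, s ≠ s' → ¬ ((s t).val ≡ (s' t).val [MOD p ^ l]) :=
  totalPerfectCode_iff_mod_p_pow_general d n S h0 hinv p l hp hcard hdvd hndvd t huniq
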